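/- If X ⊆ ℓ^∞ is nonempty and bounded and limsup_{n→∞} diam X_n = 0, then X is totally bounded (hence relatively compact) in ℓ^∞. -/

import Mathlib

/-!
Fix `ε > 0`. Since the coordinate diameters of `X` are eventually below `ε / 2`, two points of `X`
whose first `N` coordinates are `ε / 2`-close are `ε`-close in `ℓ^∞`. The projection of `X` to its
first `N` coordinates is a bounded subset of a finite-dimensional space, hence totally bounded, and
a finite `ε / 2`-net of it pulls back to a finite `ε`-net of `X`.
-/

open Metric Filter

theorem Metric.exists_finite_cover_of_totallyBounded_image {α β : Type*} [PseudoMetricSpace α]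
    [PseudoMetricSpace β] {f : α → β} {s : Set α} (hs : TotallyBounded (f '' s)) {δ ε : ℝ}
    (hδ : 0 < δ) (hf : ∀ x ∈ s, ∀ y ∈ s, dist (f x) (f y) < δ → dist x y < ε) :
    ∃ t : Set α, t.Finite ∧ s ⊆ ⋃ y ∈ t, ball y ε := by
  obtain ⟨t, hts, htfin, hcov⟩ :=
    Set.exists_subset_image_finite_and.1 (finite_approx_of_totallyBounded hs δ hδ)
  refine ⟨t, htfin, fun x hx => ?_⟩
  obtain ⟨_, ⟨y, hyt, rfl⟩, hxy⟩ := Set.mem_iUnion₂.1 (hcov ⟨x, hx, rfl⟩)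
  exact Set.mem_iUnion₂.2 ⟨y, hyt, hf x hx y (hts hyt) hxy⟩

namespace lp

theorem lipschitzWith_restrict {ι : Type*} {E : ι → Type*} [∀ i, NormedAddCommGroup (E i)]
    {p : ENNReal} [Fact (1 ≤ p)] (s : Finset ι) :
    LipschitzWith 1 (fun (x : lp E p) (i : s) => x i) :=
  LipschitzWith.of_dist_le_mul fun x y => by
    rw [NNReal.coe_one, one_mul, dist_pi_le_iff dist_nonneg]
    intro i
    simpa only [dist_eq_norm, coeFn_sub, Pi.sub_apply] using
      norm_apply_le_norm (zero_lt_one.trans_le Fact.out).ne' (x - y) i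

noncomputable def coordDiam (X : Set (lp (fun _ : ℕ => ℝ) ⊤)) (n : ℕ) : ℝ :=
  sSup {d : ℝ | ∃ x ∈ X, ∃ y ∈ X, d = |x n - y n|}

variable {X : Set (lp (fun _ : ℕ => ℝ) ⊤)}

theorem abs_sub_le_dist (x y : lp (fun _ : ℕ => ℝ) ⊤) (n : ℕ) : |x n - y n| ≤ dist x y := by
  simpa only [dist_eq_norm, coeFn_sub, Pi.sub_apply, Real.norm_eq_abs] using
    norm_apply_le_norm ENNReal.top_ne_zero (x - y) n

theorem abs_sub_le_diam (hX : Bornology.IsBounded X) {x y : lp (fun _ : ℕ => ℝ) ⊤}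
    (hx : x ∈ X) (hy : y ∈ X) (n : ℕ) : |x n - y n| ≤ diam X :=
  (abs_sub_le_dist x y n).trans (dist_le_diam_of_mem hX hx hy)

theorem coordDiam_le_diam (hX : Bornology.IsBounded X) (n : ℕ) : coordDiam X n ≤ diam X :=
  Real.sSup_le (fun _ ⟨_, hx, _, hy, hd⟩ => hd ▸ abs_sub_le_diam hX hx hy n) diam_nonneg

theorem abs_sub_le_coordDiam (hX : Bornology.IsBounded X) {x y : lp (fun _ : ℕ => ℝ) ⊤}
    (hx : x ∈ X) (hy : y ∈ X) (n : ℕ) : |x n - y n| ≤ coordDiam X n :=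
  le_csSup ⟨diam X, fun _ ⟨_, hx, _, hy, hd⟩ => hd ▸ abs_sub_le_diam hX hx hy n⟩
    ⟨x, hx, y, hy, rfl⟩

end lp

theorem stmt7_general (X : Set (lp (fun _ : ℕ => ℝ) ⊤))
    (hb : Bornology.IsBounded X)
    (h : Filter.limsup
        (fun n => sSup {d : ℝ | ∃ x ∈ X, ∃ y ∈ X, d = |x n - y n|}) Filter.atTop = 0) :
    TotallyBounded X := by
  refine totallyBounded_iff.2 fun ε hε => ?_
  have hlimsup : limsup (lp.coordDiam X) atTop < ε / 2 := h ▸ half_pos hε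
  obtain ⟨N, hN⟩ := eventually_atTop.1 <| eventually_lt_of_limsup_lt hlimsup
    (isBoundedUnder_of ⟨diam X, lp.coordDiam_le_diam hb⟩)
  have hproj := (lp.lipschitzWith_restrict (Finset.range N)).isBounded_image hb
  refine exists_finite_cover_of_totallyBounded_image
    (hproj.isCompact_closure.totallyBounded.subset subset_closure) (half_pos hε)
    fun x hx y hy hxy => ?_
  have hcoord : ∀ n, ‖(x - y) n‖ ≤ ε / 2 := fun n => by
    rw [lp.coeFn_sub, Pi.sub_apply, Real.norm_eq_abs]
    rcases lt_or_ge n N with hn | hn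
    · exact (dist_le_pi_dist _ _ ⟨n, Finset.mem_range.2 hn⟩).trans hxy.le
    · exact (lp.abs_sub_le_coordDiam hb hx hy n).trans (hN n hn).le
  calc dist x y = ‖x - y‖ := dist_eq_norm x y
    _ ≤ ε / 2 := lp.norm_le_of_forall_le (half_pos hε).le hcoord
    _ < ε := half_lt_self hε

/-- If `X` is a nonempty bounded subset of `ℓ^∞` (bounded real sequences with sup norm)
and `limsup_{n→∞} diam Xₙ = 0`, where `Xₙ = {xₙ : x ∈ X}`, then `X` is totally bounded
(hence relatively compact) in `ℓ^∞`. -/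
theorem stmt7 (X : Set (lp (fun _ : ℕ => ℝ) ⊤)) (hne : X.Nonempty)
    (hb : Bornology.IsBounded X)
    (h : Filter.limsup
        (fun n => sSup {d : ℝ | ∃ x ∈ X, ∃ y ∈ X, d = |x n - y n|}) Filter.atTop = 0) :
    TotallyBounded X :=
  stmt7_general X hb h
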